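/- arXiv:math-ph/0406033 — 4 statements merged into one kernel-verified Lean document; each statement's English description precedes it below -/
import Mathlib

section
/- Let $t > 0$, $B > 0$, and $n$ a positive integer. There exists a constant $C > 0$ such that for all $y \geq 0$, $\int_0^\infty s^{2n-1} e^{-Bs} e^{-s y/(t(s+t))}\,ds \leq \frac{C}{(1+y)^{2n}}$. -/
/-!
Split the integral at `s = t`. On `[0, t]` we have `t (s + t) ≤ 2 t²`, so the integrand is at most
`s ^ m e^{-c (1 + y) s}` with `c = min B (1 / (2 t²))`, whose integral is `m! / (c (1 + y)) ^ (m + 1)`.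
On `[t, ∞)` we have `s / (s + t) ≥ 1 / 2`, so the integrand is at most `e^{-y / (2t)} s ^ m e^{-B s}`,
and `e^{-y / (2t)}` decays faster than any power of `1 + y`.
-/

open MeasureTheory Real
open scoped Nat

lemma integrableOn_pow_mul_exp_neg_mul_Ioi (m : ℕ) {r : ℝ} (hr : 0 < r) :
    IntegrableOn (fun s : ℝ => s ^ m * exp (-(r * s))) (Set.Ioi 0) := by
  simpa [rpow_natCast] using integrableOn_rpow_mul_exp_neg_mul_rpow (s := m) (p := 1)
    (by linarith [m.cast_nonneg (α := ℝ)]) one_pos hr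

lemma integral_pow_mul_exp_neg_mul_Ioi (m : ℕ) {r : ℝ} (hr : 0 < r) :
    ∫ s in Set.Ioi (0 : ℝ), s ^ m * exp (-(r * s)) = m ! / r ^ (m + 1) := by
  have h := integral_rpow_mul_exp_neg_mul_Ioi (a := (m : ℝ) + 1) (by positivity) hr
  simp_rw [add_sub_cancel_right, rpow_natCast] at h
  rw [h, Gamma_nat_eq_factorial, ← Nat.cast_succ, rpow_natCast, one_div, inv_pow, inv_mul_eq_div]

lemma exp_neg_div_le_div_one_add_pow {b : ℝ} (hb : 0 < b) (k : ℕ) {y : ℝ} (hy : 0 ≤ y) :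
    exp (-(y / b)) ≤ exp (1 / b) * k ! * b ^ k / (1 + y) ^ k := by
  have h1y : 0 < 1 + y := by linarith
  have hpow : ((1 + y) / b) ^ k / k ! ≤ exp ((1 + y) / b) :=
    pow_div_factorial_le_exp _ (by positivity) k
  rw [div_pow, add_div, exp_add, div_div, div_le_iff₀ (by positivity)] at hpow
  rw [exp_neg, le_div_iff₀ (by positivity), inv_mul_le_iff₀ (exp_pos _)]
  linarith

lemma mul_one_add_mul_le_of_le {B c t s y : ℝ} (hcB : c ≤ B) (hct : c * (2 * t ^ 2) ≤ 1)
    (ht : 0 < t) (hs : 0 ≤ s) (hy : 0 ≤ y) (hst : s ≤ t) :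
    c * (1 + y) * s ≤ B * s + s * y / (t * (s + t)) := by
  have hct' : c * (t * (s + t)) ≤ 1 := by
    rcases le_or_gt 0 c with hc | hc
    · nlinarith [mul_le_mul_of_nonneg_left (mul_le_mul_of_nonneg_left hst ht.le) hc]
    · nlinarith [mul_nonneg ht.le (add_nonneg hs ht.le)]
  have hsy : c * y * s ≤ s * y / (t * (s + t)) := by
    rw [le_div_iff₀ (by positivity)]
    nlinarith [mul_nonneg hs hy]
  nlinarith [mul_le_mul_of_nonneg_right hcB hs]

lemma div_two_mul_le_of_le {t s y : ℝ} (ht : 0 < t) (hy : 0 ≤ y) (hts : t ≤ s) :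
    y / (2 * t) ≤ s * y / (t * (s + t)) := by
  rw [div_le_div_iff₀ (by positivity) (by nlinarith)]
  nlinarith [mul_nonneg (mul_nonneg hy ht.le) (sub_nonneg.mpr hts)]

lemma exp_mul_exp_le_add {B c t s y : ℝ} (hcB : c ≤ B) (hct : c * (2 * t ^ 2) ≤ 1)
    (ht : 0 < t) (hs : 0 ≤ s) (hy : 0 ≤ y) :
    exp (-B * s) * exp (-(s * y) / (t * (s + t))) ≤
      exp (-(c * (1 + y) * s)) + exp (-(y / (2 * t))) * exp (-(B * s)) := by
  rw [← exp_add, ← exp_add]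
  rcases le_total s t with hst | hts
  · have hexponent := mul_one_add_mul_le_of_le hcB hct ht hs hy hst
    have hexp : exp (-B * s + -(s * y) / (t * (s + t))) ≤ exp (-(c * (1 + y) * s)) := by
      rw [exp_le_exp, neg_div]
      linarith
    linarith [exp_pos (-(y / (2 * t)) + -(B * s))]
  · have hexponent := div_two_mul_le_of_le ht hy hts
    have hexp : exp (-B * s + -(s * y) / (t * (s + t))) ≤ exp (-(y / (2 * t)) + -(B * s)) := by
      rw [exp_le_exp, neg_div]
      linarith
    linarith [exp_pos (-(c * (1 + y) * s))]

theorem integral_pow_mul_exp_mul_exp_le {t B : ℝ} (ht : 0 < t) (hB : 0 < B) (m : ℕ) :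
    ∃ C : ℝ, 0 < C ∧ ∀ y : ℝ, 0 ≤ y →
      (∫ s in Set.Ioi (0 : ℝ), s ^ m * exp (-B * s) * exp (-(s * y) / (t * (s + t)))) ≤
        C / (1 + y) ^ (m + 1) := by
  set c := min B (1 / (2 * t ^ 2))
  have hc : 0 < c := lt_min hB (by positivity)
  have hct : c * (2 * t ^ 2) ≤ 1 := (le_div_iff₀ (by positivity)).mp (min_le_right _ _)
  set K := exp (1 / (2 * t)) * (m + 1)! * (2 * t) ^ (m + 1)
  refine ⟨m ! / c ^ (m + 1) + K * (m ! / B ^ (m + 1)), by positivity, fun y hy => ?_⟩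
  have hcy : 0 < c * (1 + y) := by positivity
  have hnear := integrableOn_pow_mul_exp_neg_mul_Ioi m hcy
  have hfar := (integrableOn_pow_mul_exp_neg_mul_Ioi m hB).const_mul (exp (-(y / (2 * t))))
  calc (∫ s in Set.Ioi (0 : ℝ), s ^ m * exp (-B * s) * exp (-(s * y) / (t * (s + t))))
      ≤ ∫ s in Set.Ioi (0 : ℝ), s ^ m * exp (-(c * (1 + y) * s)) +
          exp (-(y / (2 * t))) * (s ^ m * exp (-(B * s))) := by
        refine integral_mono_of_nonneg ?_ (hnear.add hfar) ?_
        · filter_upwards [ae_restrict_mem measurableSet_Ioi] with s hs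
          exact mul_nonneg (mul_nonneg (pow_nonneg (le_of_lt hs) m) (exp_pos _).le) (exp_pos _).le
        · filter_upwards [ae_restrict_mem measurableSet_Ioi] with s hs
          have := mul_le_mul_of_nonneg_left
            (exp_mul_exp_le_add (min_le_left _ _) hct ht (le_of_lt hs) hy)
            (pow_nonneg (le_of_lt hs) m)
          linarith
    _ = m ! / (c * (1 + y)) ^ (m + 1) + exp (-(y / (2 * t))) * (m ! / B ^ (m + 1)) := by
        rw [integral_add hnear hfar, integral_const_mul, integral_pow_mul_exp_neg_mul_Ioi m hcy,
          integral_pow_mul_exp_neg_mul_Ioi m hB]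
    _ ≤ m ! / (c * (1 + y)) ^ (m + 1) + K / (1 + y) ^ (m + 1) * (m ! / B ^ (m + 1)) := by
        gcongr
        exact exp_neg_div_le_div_one_add_pow (by positivity) (m + 1) hy
    _ = (m ! / c ^ (m + 1) + K * (m ! / B ^ (m + 1))) / (1 + y) ^ (m + 1) := by
        rw [mul_pow]
        field_simp

theorem integral_bound_combined_general (t B : ℝ) (ht : 0 < t) (hB : 0 < B) (n : ℕ) :
    ∃ C : ℝ, 0 < C ∧ ∀ y : ℝ, 0 ≤ y →
      (∫ s in Set.Ioi (0:ℝ), s ^ (2 * n - 1) * Real.exp (-B * s) *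
          Real.exp (-(s * y) / (t * (s + t)))) ≤ C / (1 + y) ^ (2 * n) := by
  obtain ⟨C, hC, hbound⟩ := integral_pow_mul_exp_mul_exp_le ht hB (2 * n - 1)
  refine ⟨C, hC, fun y hy => (hbound y hy).trans ?_⟩
  gcongr
  · linarith
  · omega

theorem integral_bound_combined (t B : ℝ) (ht : 0 < t) (hB : 0 < B) (n : ℕ) (hn : 1 ≤ n) :
    ∃ C : ℝ, 0 < C ∧ ∀ y : ℝ, 0 ≤ y →
      (∫ s in Set.Ioi (0:ℝ), s ^ (2 * n - 1) * Real.exp (-B * s) *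
          Real.exp (-(s * y) / (t * (s + t)))) ≤ C / (1 + y) ^ (2 * n) :=
  integral_bound_combined_general t B ht hB n
end

section
/- Let $\Gamma$ be a full-rank lattice in $\mathbb{R}^r$, $C$ a closed cone, $P$ a polynomial with nonnegative coefficients, and $t > 0$. Then there exists a constant $M$ such that for all $\tau \geq t$, $\sum_{\gamma \in C \cap \Gamma} P(|\gamma|/\sqrt{\tau}) e^{-|\gamma|^2/\tau} \leq M \tau^{r/2}$. -/
/-!
Dominate `P(x)` by `K e^{x²/2}`, so each term is at most `K e^{-|γ|²/(2τ)}`. Lattice points are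
uniformly separated, so the balls of a fixed radius `ρ` around them are disjoint, and on the ball
around `γ` the Gaussian `e^{-|x|²/(4τ)}` is at least `e^{-ρ²/(2τ)} e^{-|γ|²/(2τ)}`. Summing over
the balls, the lattice sum is at most a constant times `∫ e^{-|x|²/(4τ)} dx = (4πτ)^{r/2}`.
-/

open MeasureTheory Metric Real

lemma Polynomial.exists_eval_le_mul_exp_sq {P : Polynomial ℝ} (hP : ∀ i, 0 ≤ P.coeff i) :
    ∃ K, 0 ≤ K ∧ ∀ x, 0 ≤ x → P.eval x ≤ K * exp (x ^ 2 / 2) := by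
  refine ⟨∑ i ∈ Finset.range (P.natDegree + 1), P.coeff i * exp ((i : ℝ) ^ 2 / 2),
    Finset.sum_nonneg fun i _ => mul_nonneg (hP i) (exp_nonneg _), fun x hx => ?_⟩
  rw [Polynomial.eval_eq_sum_range, Finset.sum_mul]
  refine Finset.sum_le_sum fun i _ => ?_
  have hpow : x ^ i ≤ exp (i * x) := by
    rw [exp_nat_mul]
    exact pow_le_pow_left₀ hx (by linarith [add_one_le_exp x]) i
  have hexp : exp (i * x) ≤ exp ((i : ℝ) ^ 2 / 2) * exp (x ^ 2 / 2) := by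
    rw [← exp_add]
    exact exp_le_exp.mpr (by nlinarith [sq_nonneg ((i : ℝ) - x)])
  calc P.coeff i * x ^ i ≤ P.coeff i * (exp ((i : ℝ) ^ 2 / 2) * exp (x ^ 2 / 2)) :=
        mul_le_mul_of_nonneg_left (hpow.trans hexp) (hP i)
    _ = P.coeff i * exp ((i : ℝ) ^ 2 / 2) * exp (x ^ 2 / 2) := by ring

lemma mul_exp_neg_sq_div_le {f : ℝ → ℝ} {K : ℝ} (hf : ∀ x, 0 ≤ x → f x ≤ K * exp (x ^ 2 / 2))
    {a τ : ℝ} (ha : 0 ≤ a) (hτ : 0 < τ) :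
    f (a / √τ) * exp (-a ^ 2 / τ) ≤ K * exp (-a ^ 2 / (2 * τ)) := by
  have hfa : f (a / √τ) ≤ K * exp (a ^ 2 / τ / 2) := by
    simpa only [div_pow, sq_sqrt hτ.le] using hf (a / √τ) (by positivity)
  calc f (a / √τ) * exp (-a ^ 2 / τ) ≤ K * exp (a ^ 2 / τ / 2) * exp (-a ^ 2 / τ) :=
        mul_le_mul_of_nonneg_right hfa (exp_nonneg _)
    _ = K * exp (-a ^ 2 / (2 * τ)) := by
        rw [mul_assoc, ← exp_add]
        ring_nf

lemma exists_pos_pairwise_le_dist {E : Type*} [SeminormedAddCommGroup E] [DiscreteTopology E] :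
    ∃ ε > 0, Pairwise fun x y : E => ε ≤ dist x y := by
  obtain ⟨ε, hε, hball⟩ := isOpen_iff.mp (isOpen_discrete ({0} : Set E)) 0 rfl
  refine ⟨ε, hε, fun x y hxy => not_lt.mp fun hlt => hxy ?_⟩
  have : x - y ∈ ball (0 : E) ε := by rwa [mem_ball, dist_zero_right, ← dist_eq_norm]
  exact sub_eq_zero.mp (hball this)

lemma measureReal_ball_mul_sum_le_integral {E ι : Type*} [NormedAddCommGroup E] [ProperSpace E]
    [MeasurableSpace E] [BorelSpace E]
    (μ : Measure E) [μ.IsAddHaarMeasure] {p : ι → E} {ρ : ℝ}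
    (hp : Pairwise fun i j => 2 * ρ ≤ dist (p i) (p j)) {f : E → ℝ} (hf : Integrable f μ)
    (hf0 : 0 ≤ f) {c : ι → ℝ} (hc : ∀ i, ∀ x ∈ ball (p i) ρ, c i ≤ f x) (F : Finset ι) :
    μ.real (ball 0 ρ) * ∑ i ∈ F, c i ≤ ∫ x, f x ∂μ := by
  have hdisj : (F : Set ι).Pairwise (Function.onFun Disjoint fun i => ball (p i) ρ) :=
    fun i _ j _ hij => ball_disjoint_ball (by linarith [hp hij])
  calc μ.real (ball 0 ρ) * ∑ i ∈ F, c i = ∑ i ∈ F, μ.real (ball (p i) ρ) • c i := by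
        simp only [Finset.mul_sum, Measure.addHaar_real_ball_center, smul_eq_mul]
    _ ≤ ∑ i ∈ F, ∫ x in ball (p i) ρ, f x ∂μ := Finset.sum_le_sum fun i _ =>
        setIntegral_ge_of_const_le measurableSet_ball measure_ball_lt_top.ne (hc i)
          hf.integrableOn
    _ = ∫ x in ⋃ i ∈ F, ball (p i) ρ, f x ∂μ :=
        (integral_biUnion_finset F (fun _ _ => measurableSet_ball) hdisj
          fun _ _ => hf.integrableOn).symm
    _ ≤ ∫ x, f x ∂μ := setIntegral_le_integral hf (.of_forall hf0)

lemma exp_mul_exp_le_exp_of_dist_lt {E : Type*} [SeminormedAddCommGroup E] {p x : E}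
    {ρ τ : ℝ} (hτ : 0 < τ) (hx : dist x p < ρ) :
    exp (-ρ ^ 2 / (2 * τ)) * exp (-‖p‖ ^ 2 / (2 * τ)) ≤ exp (-(4 * τ)⁻¹ * ‖x‖ ^ 2) := by
  have hxp : ‖x‖ ≤ ‖p‖ + ρ := by
    linarith [norm_sub_norm_le x p, (dist_eq_norm x p).symm.trans_lt hx |>.le]
  have hsq : ‖x‖ ^ 2 ≤ 2 * ‖p‖ ^ 2 + 2 * ρ ^ 2 := by
    nlinarith [norm_nonneg x, sq_nonneg (‖p‖ - ρ)]
  rw [← exp_add, exp_le_exp, show -ρ ^ 2 / (2 * τ) + -‖p‖ ^ 2 / (2 * τ) =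
    -(4 * τ)⁻¹ * (2 * ‖p‖ ^ 2 + 2 * ρ ^ 2) by field_simp; ring]
  exact mul_le_mul_of_nonpos_left hsq (neg_nonpos.mpr (by positivity))

section Gaussian

variable {V ι : Type*} [NormedAddCommGroup V] [InnerProductSpace ℝ V] [FiniteDimensional ℝ V]
  [MeasurableSpace V] [BorelSpace V]

lemma measureReal_ball_mul_sum_exp_neg_sq_norm_le {p : ι → V} {ρ : ℝ}
    (hp : Pairwise fun i j => 2 * ρ ≤ dist (p i) (p j)) {τ : ℝ} (hτ : 0 < τ) (F : Finset ι) :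
    volume.real (ball (0 : V) ρ) * ∑ i ∈ F, exp (-ρ ^ 2 / (2 * τ)) * exp (-‖p i‖ ^ 2 / (2 * τ)) ≤
      (4 * π * τ) ^ (Module.finrank ℝ V / 2 : ℝ) := by
  have hint : ∫ x : V, exp (-(4 * τ)⁻¹ * ‖x‖ ^ 2) = (4 * π * τ) ^ (Module.finrank ℝ V / 2 : ℝ) := by
    rw [GaussianFourier.integral_rexp_neg_mul_sq_norm (by positivity), div_inv_eq_mul]
    ring_nf
  rw [← hint]
  exact measureReal_ball_mul_sum_le_integral volume hp
    (.of_integral_ne_zero (by rw [hint]; positivity)) (fun x => (exp_pos _).le)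
    (fun i x hx => exp_mul_exp_le_exp_of_dist_lt hτ hx) F

lemma sum_exp_neg_sq_norm_le_mul_rpow {p : ι → V} {ρ : ℝ} (hρ : 0 < ρ)
    (hp : Pairwise fun i j => 2 * ρ ≤ dist (p i) (p j)) {t τ : ℝ} (ht : 0 < t) (hτ : t ≤ τ)
    (F : Finset ι) :
    ∑ i ∈ F, exp (-‖p i‖ ^ 2 / (2 * τ)) ≤
      exp (ρ ^ 2 / (2 * t)) * (4 * π) ^ (Module.finrank ℝ V / 2 : ℝ) /
        volume.real (ball (0 : V) ρ) * τ ^ (Module.finrank ℝ V / 2 : ℝ) := by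
  have hτ0 : 0 < τ := ht.trans_le hτ
  have hvol : 0 < volume.real (ball (0 : V) ρ) :=
    ENNReal.toReal_pos (measure_ball_pos _ _ hρ).ne' measure_ball_lt_top.ne
  have hpack := measureReal_ball_mul_sum_exp_neg_sq_norm_le hp hτ0 F
  rw [← Finset.mul_sum, mul_rpow (by positivity) hτ0.le] at hpack
  have hρτ : exp (ρ ^ 2 / (2 * τ)) ≤ exp (ρ ^ 2 / (2 * t)) := by gcongr
  rw [div_mul_eq_mul_div, le_div_iff₀ hvol]
  calc (∑ i ∈ F, exp (-‖p i‖ ^ 2 / (2 * τ))) * volume.real (ball (0 : V) ρ)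
      = exp (ρ ^ 2 / (2 * τ)) * (volume.real (ball (0 : V) ρ) *
          (exp (-ρ ^ 2 / (2 * τ)) * ∑ i ∈ F, exp (-‖p i‖ ^ 2 / (2 * τ)))) := by
        rw [neg_div, exp_neg]
        field_simp
    _ ≤ exp (ρ ^ 2 / (2 * t)) * ((4 * π) ^ (Module.finrank ℝ V / 2 : ℝ) *
          τ ^ (Module.finrank ℝ V / 2 : ℝ)) := by
        gcongr
    _ = _ := by ring

end Gaussian

theorem lattice_sum_bound_general (r : ℕ)
    (Γ : Submodule ℤ (EuclideanSpace ℝ (Fin r)))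
    [DiscreteTopology Γ]
    (C : Set (EuclideanSpace ℝ (Fin r)))
    (P : Polynomial ℝ) (hP : ∀ i, 0 ≤ P.coeff i)
    (t : ℝ) (ht : 0 < t) :
    ∃ M : ℝ, ∀ τ : ℝ, t ≤ τ →
      (∑' γ : {γ : Γ // (γ : EuclideanSpace ℝ (Fin r)) ∈ C},
          P.eval (‖((γ : Γ) : EuclideanSpace ℝ (Fin r))‖ / Real.sqrt τ) *
            Real.exp (-‖((γ : Γ) : EuclideanSpace ℝ (Fin r))‖ ^ 2 / τ)) ≤
        M * τ ^ ((r : ℝ) / 2) := by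
  obtain ⟨K, hK0, hK⟩ := Polynomial.exists_eval_le_mul_exp_sq hP
  obtain ⟨ε, hε, hsep⟩ := exists_pos_pairwise_le_dist (E := Γ)
  have hsep' : Pairwise fun i j : {γ : Γ // (γ : EuclideanSpace ℝ (Fin r)) ∈ C} =>
      2 * (ε / 2) ≤ dist ((i : Γ) : EuclideanSpace ℝ (Fin r)) (j : Γ) := by
    rw [mul_div_cancel₀ _ two_ne_zero]
    exact hsep.comp_of_injective Subtype.val_injective
  set B := exp ((ε / 2) ^ 2 / (2 * t)) * (4 * π) ^ ((r : ℝ) / 2) /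
    volume.real (ball (0 : EuclideanSpace ℝ (Fin r)) (ε / 2))
  have hB : 0 ≤ B := div_nonneg (by positivity) measureReal_nonneg
  refine ⟨K * B, fun τ hτ => ?_⟩
  have hτ0 : 0 < τ := ht.trans_le hτ
  refine tsum_le_of_sum_le' (by positivity) fun F => ?_
  have hbound := sum_exp_neg_sq_norm_le_mul_rpow (half_pos hε) hsep' ht hτ F
  rw [finrank_euclideanSpace_fin] at hbound
  calc _ ≤ ∑ γ ∈ F, K * exp (-‖((γ : Γ) : EuclideanSpace ℝ (Fin r))‖ ^ 2 / (2 * τ)) :=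
        Finset.sum_le_sum fun γ _ => mul_exp_neg_sq_div_le hK (norm_nonneg _) hτ0
    _ ≤ K * (B * τ ^ ((r : ℝ) / 2)) := by
        rw [← Finset.mul_sum]
        exact mul_le_mul_of_nonneg_left hbound hK0
    _ = K * B * τ ^ ((r : ℝ) / 2) := by ring

/-- For a full-rank lattice `Γ` in `ℝ^r`, a closed cone `C`, a polynomial `P` with
nonnegative coefficients, and `t > 0`, there is a constant `M` such that for all
`τ ≥ t`, `∑_{γ ∈ C ∩ Γ} P(|γ|/√τ) e^{-|γ|²/τ} ≤ M τ^{r/2}`. -/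
theorem lattice_sum_bound (r : ℕ)
    (Γ : Submodule ℤ (EuclideanSpace ℝ (Fin r)))
    [DiscreteTopology Γ] [IsZLattice ℝ Γ]
    (C : Set (EuclideanSpace ℝ (Fin r))) (hC : IsClosed C)
    (hcone : ∀ x ∈ C, ∀ s : ℝ, 0 ≤ s → s • x ∈ C)
    (P : Polynomial ℝ) (hP : ∀ i, 0 ≤ P.coeff i)
    (t : ℝ) (ht : 0 < t) :
    ∃ M : ℝ, ∀ τ : ℝ, t ≤ τ →
      (∑' γ : {γ : Γ // (γ : EuclideanSpace ℝ (Fin r)) ∈ C},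
          P.eval (‖((γ : Γ) : EuclideanSpace ℝ (Fin r))‖ / Real.sqrt τ) *
            Real.exp (-‖((γ : Γ) : EuclideanSpace ℝ (Fin r))‖ ^ 2 / τ)) ≤
        M * τ ^ ((r : ℝ) / 2) :=
  lattice_sum_bound_general r Γ C P hP t ht
end

section
/- Let $t > 0$, $d \geq 1$, $|\delta|^2 \geq 0$, and $n \geq 1$. Define $\phi_{n,c}(y) = \left[(c + d/dt)^n \left((\pi t)^{-d/2} e^{-|\delta|^2 t} e^{-y/t}\right)\right] / \left((\pi t)^{-d/2} e^{-|\delta|^2 t} e^{-y/t}\right)$ for $y \geq 0$. Then $\phi_{n,c}$ is a polynomial in $y$ of degree $n$, and for all sufficiently large $c > 0$, every coefficient of this polynomial is positive; in particular $\phi_{n,c}(y) > 0$ for all $y \geq 0$. -/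
/-!
With `u = 1/s`, the logarithmic `s`-derivative of the Gaussian factor `f` is `-δ² + κu + yu²`
(`κ = -d/2`), so `(c + d/ds)^m f = f · Pₘ(u, y)` with `Pₘ = (c + L)^m 1`, where
`L W = (-δ² + κu + yu²) W - u² ∂ᵤW` acts on `ℝ[u][y]`. The operator `L` raises the `y`-degree by
at most one and multiplies the top `y`-coefficient by `u²`, so `Lʲ 1` has `y`-degree `j` and top
coefficient `u^{2j}`. As `c` commutes with `L`, `(c + L)ⁿ 1 = ∑ₖ C(n,k) cᵏ Lⁿ⁻ᵏ 1`: the coefficient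
of `yˡ` is a polynomial in `c` of degree `n - l` with leading coefficient `C(n,l) t^{-2l} > 0`.
-/

open Polynomial
open scoped Polynomial.Bivariate

section
variable {R : Type*} [CommRing R]

lemma coeff_sum_monomial_derivative (W : R[X][Y]) (k : ℕ) :
    (W.sum fun i a => monomial i (derivative a)).coeff k = derivative (W.coeff k) := by
  rw [sum_def, finsetSum_coeff]
  simp only [coeff_monomial]
  rw [Finset.sum_ite_eq']
  split_ifs with h
  · rfl
  · simp [notMem_support_iff.mp h]

noncomputable def derivCoeffs : R[X][Y] →ₗ[R] R[X][Y] where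
  toFun W := W.sum fun k a => monomial k (derivative a)
  map_add' V W := by
    ext1 k
    rw [coeff_add, coeff_sum_monomial_derivative, coeff_sum_monomial_derivative,
      coeff_sum_monomial_derivative, coeff_add, derivative_add]
  map_smul' r W := by
    ext1 k
    rw [coeff_smul, coeff_sum_monomial_derivative, coeff_sum_monomial_derivative,
      coeff_smul, RingHom.id_apply, derivative_smul]

@[simp]
lemma coeff_derivCoeffs (W : R[X][Y]) (k : ℕ) :
    (derivCoeffs W).coeff k = derivative (W.coeff k) :=
  coeff_sum_monomial_derivative W k

lemma natDegree_derivCoeffs_le (W : R[X][Y]) : (derivCoeffs W).natDegree ≤ W.natDegree :=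
  natDegree_le_iff_coeff_eq_zero.mpr fun k hk => by simp [coeff_eq_zero_of_natDegree_lt hk]

lemma derivCoeffs_monomial (k : ℕ) (a : R[X]) :
    derivCoeffs (monomial k a) = monomial k (derivative a) := by
  ext1 i; rw [coeff_derivCoeffs, coeff_monomial, coeff_monomial]; split_ifs <;> simp

lemma derivative_eval_C (W : R[X][Y]) (y : R) :
    derivative (W.eval (C y)) = (derivCoeffs W).eval (C y) := by
  induction W using Polynomial.induction_on' with
  | add V W hV hW => simp [hV, hW]
  | monomial k a =>
    rw [derivCoeffs_monomial, eval_monomial, eval_monomial, derivative_mul, ← C_pow, derivative_C,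
      mul_zero, add_zero]

/-- `X` stands for `u = 1/s` and `Y` for `y`; `derivCoeffs` is `∂ᵤ`. -/
noncomputable def symbolDeriv (α : R[X]) : Module.End R R[X][Y] :=
  LinearMap.mulLeft R (C α + C (X ^ 2) * Y) - LinearMap.mulLeft R (C (X ^ 2)) ∘ₗ derivCoeffs

lemma symbolDeriv_apply (α : R[X]) (W : R[X][Y]) :
    symbolDeriv α W = (C α + C (X ^ 2) * Y) * W - C (X ^ 2) * derivCoeffs W := rfl

lemma symbolDeriv_C_add (c : R) (α : R[X]) :
    symbolDeriv (C c + α) = algebraMap R _ c + symbolDeriv α := by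
  ext1 W
  rw [symbolDeriv_apply, LinearMap.add_apply, Module.algebraMap_end_apply, symbolDeriv_apply,
    Algebra.smul_def, C_add, Polynomial.algebraMap_apply, algebraMap_eq]
  ring

lemma natDegree_symbolDeriv_le (α : R[X]) (W : R[X][Y]) :
    (symbolDeriv α W).natDegree ≤ W.natDegree + 1 := by
  rw [symbolDeriv_apply]
  refine (natDegree_sub_le _ _).trans (max_le ?_ ?_)
  · refine natDegree_mul_le.trans ?_
    have : (C α + C (X ^ 2) * Y).natDegree ≤ 1 := by compute_degree
    omega
  · exact natDegree_C_mul_le _ _ |>.trans ((natDegree_derivCoeffs_le W).trans (Nat.le_succ _))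

lemma coeff_symbolDeriv_succ {α : R[X]} {W : R[X][Y]} {m : ℕ} (hW : W.natDegree ≤ m) :
    (symbolDeriv α W).coeff (m + 1) = X ^ 2 * W.coeff m := by
  have hvan : W.coeff (m + 1) = 0 := coeff_eq_zero_of_natDegree_lt (by omega)
  simp only [symbolDeriv_apply, coeff_sub, add_mul, coeff_add, mul_assoc, coeff_C_mul, coeff_X_mul,
    coeff_derivCoeffs, hvan, derivative_zero, mul_zero, zero_add, sub_zero]

lemma natDegree_symbolDeriv_pow_one_le (α : R[X]) (n : ℕ) :
    ((symbolDeriv α ^ n) 1).natDegree ≤ n := by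
  induction n with
  | zero => simp
  | succ n ih =>
    rw [pow_succ', Module.End.mul_apply]
    exact (natDegree_symbolDeriv_le α _).trans (by omega)

lemma coeff_symbolDeriv_pow_one_self (α : R[X]) (n : ℕ) :
    ((symbolDeriv α ^ n) 1).coeff n = X ^ (2 * n) := by
  induction n with
  | zero => simp
  | succ n ih =>
    rw [pow_succ', Module.End.mul_apply,
      coeff_symbolDeriv_succ (natDegree_symbolDeriv_pow_one_le α n), ih]
    ring

lemma algebraMap_add_pow_apply {M : Type*} [AddCommGroup M] [Module R M] (c : R)
    (L : Module.End R M) (n : ℕ) (w : M) :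
    ((algebraMap R _ c + L) ^ n) w =
      ∑ k ∈ Finset.range (n + 1), (c ^ k * n.choose k) • (L ^ (n - k)) w := by
  rw [(Algebra.commute_algebraMap_left c L).add_pow, LinearMap.sum_apply]
  refine Finset.sum_congr rfl fun k _ => ?_
  simp [← map_pow, mul_smul, Nat.cast_smul_eq_nsmul, smul_comm (n.choose k)]

lemma eval_coeff_symbolDeriv_C_add_pow (α : R[X]) (c x : R) (n l : ℕ) :
    (((symbolDeriv (C c + α) ^ n) 1).coeff l).eval x =
      ∑ k ∈ Finset.range (n + 1),
        (n.choose k * (((symbolDeriv α ^ (n - k)) 1).coeff l).eval x) * c ^ k := by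
  rw [symbolDeriv_C_add, algebraMap_add_pow_apply, finsetSum_coeff, eval_finsetSum]
  refine Finset.sum_congr rfl fun k _ => ?_
  rw [coeff_smul, eval_smul, smul_eq_mul]
  ring

end

lemma eventually_pos_sum_mul_pow {N m : ℕ} (hm : m ≤ N) {a : ℕ → ℝ} (ha : 0 < a m)
    (hvan : ∀ k, m < k → k ≤ N → a k = 0) :
    ∀ᶠ c in Filter.atTop, 0 < ∑ k ∈ Finset.range (N + 1), a k * c ^ k := by
  set q : ℝ[X] := ∑ k ∈ Finset.range (N + 1), monomial k (a k)
  have hcoeff : ∀ k, q.coeff k = if k ≤ N then a k else 0 := by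
    intro k
    simp [q, finsetSum_coeff, coeff_monomial]
  have hdeg : q.natDegree = m := by
    refine natDegree_eq_of_le_of_coeff_ne_zero ?_ (by simpa [hcoeff, hm] using ha.ne')
    refine natDegree_le_iff_coeff_eq_zero.mpr fun k hk => ?_
    rw [hcoeff]
    split_ifs with hkN
    exacts [hvan k hk hkN, rfl]
  have hlead : 0 < q.leadingCoeff := by simpa [leadingCoeff, hdeg, hcoeff, hm] using ha
  have hq : ∀ᶠ c in Filter.atTop, 0 < q.eval c :=
    q.isEquivalent_atTop_lead.eventually_pos <|
      (Filter.eventually_gt_atTop 0).mono fun c hc => by positivity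
  simpa [q, eval_finsetSum] using hq

lemma eval_pos_of_coeff_pos {p : ℝ[X]} (hp : ∀ i ≤ p.natDegree, 0 < p.coeff i) {y : ℝ}
    (hy : 0 ≤ y) : 0 < p.eval y := by
  rw [eval_eq_sum_range]
  refine Finset.sum_pos' (fun i hi => ?_) ⟨0, by simp, by simpa using hp 0 (Nat.zero_le _)⟩
  exact mul_nonneg (hp i (Nat.lt_succ_iff.mp (Finset.mem_range.mp hi))).le (pow_nonneg hy i)

lemma natDegree_map_symbolDeriv_pow_one (α : ℝ[X]) {x : ℝ} (hx : x ≠ 0) (n : ℕ) :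
    (((symbolDeriv α ^ n) 1).map (evalRingHom x)).natDegree = n :=
  natDegree_eq_of_le_of_coeff_ne_zero
    (natDegree_map_le.trans (natDegree_symbolDeriv_pow_one_le α n))
    (by simp [coeff_symbolDeriv_pow_one_self, hx])

lemma eventually_pos_coeff_map_symbolDeriv_C_add_pow (α : ℝ[X]) {x : ℝ} (hx : 0 < x)
    {n l : ℕ} (hl : l ≤ n) :
    ∀ᶠ c in Filter.atTop, 0 < (((symbolDeriv (C c + α) ^ n) 1).map (evalRingHom x)).coeff l := by
  simp only [coeff_map, coe_evalRingHom, eval_coeff_symbolDeriv_C_add_pow]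
  refine eventually_pos_sum_mul_pow (Nat.sub_le n l) ?_ fun k hk hkn => ?_
  · rw [Nat.sub_sub_self hl, coeff_symbolDeriv_pow_one_self, eval_pow, eval_X]
    have := Nat.choose_pos (Nat.sub_le n l)
    positivity
  · rw [coeff_eq_zero_of_natDegree_lt
      ((natDegree_symbolDeriv_pow_one_le α _).trans_lt (by omega)), eval_zero, mul_zero]

open Real

noncomputable def gaussianFactor (κ δ2 s y : ℝ) : ℝ :=
  (π * s) ^ κ * exp (-δ2 * s) * exp (-y / s)

lemma gaussianFactor_pos (κ δ2 y : ℝ) {s : ℝ} (hs : 0 < s) :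
    0 < gaussianFactor κ δ2 s y := by
  unfold gaussianFactor; positivity

lemma hasDerivAt_gaussianFactor (κ δ2 y : ℝ) {s : ℝ} (hs : 0 < s) :
    HasDerivAt (fun s => gaussianFactor κ δ2 s y)
      ((-δ2 + κ * s⁻¹ + y * s⁻¹ ^ 2) * gaussianFactor κ δ2 s y) s := by
  have hπs : 0 < π * s := by positivity
  have hpow := ((hasDerivAt_id s).const_mul π).rpow_const (p := κ) (Or.inl hπs.ne')
  have hexp₁ := ((hasDerivAt_id s).const_mul (-δ2)).exp
  have hexp₂ := ((hasDerivAt_inv hs.ne').const_mul (-y)).exp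
  refine ((hpow.mul hexp₁).mul hexp₂).congr_deriv ?_
  simp only [gaussianFactor, id, mul_one, Pi.mul_apply, rpow_sub_one hπs.ne', div_eq_mul_inv]
  field_simp
  ring

lemma hasDerivAt_evalEval_inv (W : ℝ[X][Y]) (y : ℝ) {s : ℝ} (hs : s ≠ 0) :
    HasDerivAt (fun s => W.evalEval s⁻¹ y)
      ((derivCoeffs W).evalEval s⁻¹ y * -(s ^ 2)⁻¹) s := by
  have := ((W.eval (C y)).hasDerivAt s⁻¹).comp s (hasDerivAt_inv hs)
  rwa [derivative_eval_C] at this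

lemma hasDerivAt_gaussianFactor_mul_evalEval (κ δ2 y : ℝ) {s : ℝ} (hs : 0 < s) (W : ℝ[X][Y]) :
    HasDerivAt (fun s => gaussianFactor κ δ2 s y * W.evalEval s⁻¹ y)
      (gaussianFactor κ δ2 s y * (symbolDeriv (C (-δ2) + C κ * X) W).evalEval s⁻¹ y) s := by
  refine ((hasDerivAt_gaussianFactor κ δ2 y hs).mul
    (hasDerivAt_evalEval_inv W y hs.ne')).congr_deriv ?_
  simp only [symbolDeriv_apply, evalEval_sub, evalEval_mul, evalEval_add, evalEval_neg,
    evalEval_pow, evalEval_C, evalEval_X, map_neg, map_add, map_mul, map_pow, eval_C, eval_X,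
    inv_pow, mul_neg]
  ring

lemma eq_gaussianFactor_mul_evalEval (κ δ2 c : ℝ) (g : ℕ → ℝ → ℝ → ℝ)
    (hg0 : ∀ s y, g 0 s y = gaussianFactor κ δ2 s y)
    (hgsucc : ∀ m s y, g (m + 1) s y = c * g m s y + deriv (fun u => g m u y) s) (m : ℕ)
    {s : ℝ} (hs : 0 < s) (y : ℝ) :
    g m s y = gaussianFactor κ δ2 s y *
      ((symbolDeriv (C c + (C (-δ2) + C κ * X)) ^ m) 1).evalEval s⁻¹ y := by
  induction m generalizing s with
  | zero => simp [hg0]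
  | succ m ih =>
    have hlocal : (fun u => g m u y) =ᶠ[nhds s] fun u => gaussianFactor κ δ2 u y *
        ((symbolDeriv (C c + (C (-δ2) + C κ * X)) ^ m) 1).evalEval u⁻¹ y :=
      Filter.eventually_of_mem (Ioi_mem_nhds hs) fun u hu => ih hu
    rw [hgsucc, hlocal.deriv_eq, (hasDerivAt_gaussianFactor_mul_evalEval κ δ2 y hs _).deriv, ih hs,
      pow_succ', Module.End.mul_apply, symbolDeriv_C_add, LinearMap.add_apply,
      Module.algebraMap_end_apply, evalEval_add, evalEval_smul, smul_eq_mul]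
    ring

theorem toeplitz_symbol_polynomial_positive_general (d : ℕ) (δ2 : ℝ)
    (t : ℝ) (ht : 0 < t) (n : ℕ)
    (g : ℝ → ℕ → ℝ → ℝ → ℝ)
    (hg0 : ∀ c : ℝ, ∀ s y : ℝ,
      g c 0 s y = (Real.pi * s) ^ (-(d : ℝ) / 2) * Real.exp (-δ2 * s) * Real.exp (-y / s))
    (hgsucc : ∀ c : ℝ, ∀ m : ℕ, ∀ s y : ℝ,
      g c (m + 1) s y = c * g c m s y + deriv (fun u : ℝ => g c m u y) s) :
    (∀ c : ℝ, ∃ p : Polynomial ℝ, p.natDegree = n ∧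
      ∀ y : ℝ, g c n t y /
        ((Real.pi * t) ^ (-(d : ℝ) / 2) * Real.exp (-δ2 * t) * Real.exp (-y / t)) =
          p.eval y) ∧
    ∃ c₀ : ℝ, 0 < c₀ ∧ ∀ c : ℝ, c₀ ≤ c →
      ∃ p : Polynomial ℝ, p.natDegree = n ∧
        (∀ y : ℝ, g c n t y /
          ((Real.pi * t) ^ (-(d : ℝ) / 2) * Real.exp (-δ2 * t) * Real.exp (-y / t)) =
            p.eval y) ∧
        (∀ i : ℕ, i ≤ n → 0 < p.coeff i) ∧
        (∀ y : ℝ, 0 ≤ y → 0 < p.eval y) := by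
  set P : ℝ → ℝ[X] := fun c =>
    ((symbolDeriv (C c + (C (-δ2) + C (-(d : ℝ) / 2) * X)) ^ n) 1).map (evalRingHom t⁻¹)
  have hsymbol : ∀ c y, g c n t y / gaussianFactor (-(d : ℝ) / 2) δ2 t y = (P c).eval y := by
    intro c y
    rw [eq_gaussianFactor_mul_evalEval _ _ c (g c) (hg0 c) (hgsucc c) n ht,
      mul_div_cancel_left₀ _ (gaussianFactor_pos _ _ _ ht).ne', map_evalRingHom_eval]
  have hdeg : ∀ c, (P c).natDegree = n := fun c =>
    natDegree_map_symbolDeriv_pow_one _ (inv_pos.mpr ht).ne' n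
  obtain ⟨c₁, hc₁⟩ := Filter.eventually_atTop.mp <|
    (Finset.range (n + 1)).eventually_all.mpr fun l hl =>
      eventually_pos_coeff_map_symbolDeriv_C_add_pow _ (inv_pos.mpr ht) (Nat.lt_succ_iff.mp
        (Finset.mem_range.mp hl))
  refine ⟨fun c => ⟨P c, hdeg c, hsymbol c⟩, max c₁ 1, by positivity, fun c hc => ?_⟩
  have hpos : ∀ i ≤ n, 0 < (P c).coeff i := fun i hi =>
    hc₁ c (le_of_max_le_left hc) i (Finset.mem_range.mpr (Nat.lt_succ_of_le hi))
  exact ⟨P c, hdeg c, hsymbol c, hpos, fun y hy => eval_pos_of_coeff_pos (hdeg c ▸ hpos) hy⟩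

/-- Scalar model of Proposition 3.7: with `f y s = (π s)^{-d/2} e^{-|δ|² s} e^{-y/s}` and
`g c m` defined by the recursion `g c 0 = f`, `g c (m+1) = c · g c m + (d/ds) g c m`
(i.e. `g c n = (c + d/dt)^n f`), the symbol `φ_{n,c}(y) = g c n t y / f y t` is a
polynomial in `y` of degree `n`; and for all sufficiently large `c > 0` all its
coefficients are positive, so in particular `φ_{n,c}(y) > 0` for all `y ≥ 0`. -/
theorem toeplitz_symbol_polynomial_positive (d : ℕ) (hd : 1 ≤ d) (δ2 : ℝ) (hδ2 : 0 ≤ δ2)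
    (t : ℝ) (ht : 0 < t) (n : ℕ) (hn : 1 ≤ n)
    (g : ℝ → ℕ → ℝ → ℝ → ℝ)
    (hg0 : ∀ c : ℝ, ∀ s y : ℝ,
      g c 0 s y = (Real.pi * s) ^ (-(d : ℝ) / 2) * Real.exp (-δ2 * s) * Real.exp (-y / s))
    (hgsucc : ∀ c : ℝ, ∀ m : ℕ, ∀ s y : ℝ,
      g c (m + 1) s y = c * g c m s y + deriv (fun u : ℝ => g c m u y) s) :
    (∀ c : ℝ, ∃ p : Polynomial ℝ, p.natDegree = n ∧
      ∀ y : ℝ, g c n t y /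
        ((Real.pi * t) ^ (-(d : ℝ) / 2) * Real.exp (-δ2 * t) * Real.exp (-y / t)) =
          p.eval y) ∧
    ∃ c₀ : ℝ, 0 < c₀ ∧ ∀ c : ℝ, c₀ ≤ c →
      ∃ p : Polynomial ℝ, p.natDegree = n ∧
        (∀ y : ℝ, g c n t y /
          ((Real.pi * t) ^ (-(d : ℝ) / 2) * Real.exp (-δ2 * t) * Real.exp (-y / t)) =
            p.eval y) ∧
        (∀ i : ℕ, i ≤ n → 0 < p.coeff i) ∧
        (∀ y : ℝ, 0 ≤ y → 0 < p.eval y) :=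
  toeplitz_symbol_polynomial_positive_general d δ2 t ht n g hg0 hgsucc
end

section
/- Let $t > 0$ and let $F: \mathbb{C} \to \mathbb{C}$ be holomorphic. Suppose that for every positive integer $n$ there is a constant $A_n$ with $|F(x+iy)|^2 \leq A_n \frac{e^{y^2/t}}{(1+x^2+y^2)^{2n}}$ for all $x, y \in \mathbb{R}$. Then for every polynomial $p$ and every $m \geq 0$, the function $z \mapsto p(x,y) F^{(m)}(z)$ is square-integrable with respect to the measure $(\pi t)^{-1/2} e^{-y^2/t}\,dx\,dy$ on $\mathbb{C}$. -/
open MeasureTheory Real Metric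

/-! A holomorphic `F` with `|F(x+iy)|² ≲ e^{y²/t} (1+|z|)^{-n}` for every `n` keeps such bounds
after differentiation: the Cauchy estimate on the circle of radius `(1+|z|)⁻¹` around `z` costs
only a factor `(1+|z|)²`, and on that circle `e^{(Im w)²/t}` and `1+|w|` stay comparable to their
values at `z`. Against the density `e^{-y²/t}` the Gaussian factor cancels, so `|p F^{(m)}|²`
is dominated by `(1+|z|)^{-4}`, which is integrable on `ℂ ≅ ℝ²`. -/

lemma sq_norm_deriv_le_of_forall_mem_sphere {F : ℂ → ℂ} (hF : Differentiable ℂ F) {z : ℂ}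
    {r B : ℝ} (hr : 0 < r) (hB : ∀ w ∈ sphere z r, ‖F w‖ ^ 2 ≤ B) :
    ‖deriv F z‖ ^ 2 ≤ B / r ^ 2 := by
  have hB0 : 0 ≤ B := (sq_nonneg _).trans (hB _ (by simp [hr.le] : z + r ∈ sphere z r))
  have := Complex.norm_deriv_le_of_forall_mem_sphere_norm_le hr hF.diffContOnCl
    fun w hw => Real.le_sqrt_of_sq_le (hB w hw)
  calc ‖deriv F z‖ ^ 2 ≤ (√B / r) ^ 2 := by gcongr
    _ = B / r ^ 2 := by rw [div_pow, sq_sqrt hB0]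

lemma im_sq_le_of_norm_sub_le_inv {z w : ℂ} (hw : ‖w - z‖ ≤ (1 + ‖z‖)⁻¹) :
    w.im ^ 2 ≤ z.im ^ 2 + 3 := by
  have hz : 1 ≤ 1 + ‖z‖ := by simp
  set r := (1 + ‖z‖)⁻¹
  have hr0 : 0 ≤ r := by positivity
  have hr1 : r ≤ 1 := inv_le_one_of_one_le₀ hz
  have hrz : |z.im| * r ≤ 1 := by
    rw [← div_eq_mul_inv, div_le_one (by positivity)]
    linarith [Complex.abs_im_le_norm z]
  have hdiff : |w.im - z.im| ≤ r := (Complex.abs_im_le_norm (w - z)).trans hw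
  have : |w.im| ≤ |z.im| + r := by linarith [abs_sub_abs_le_abs_sub w.im z.im]
  nlinarith [abs_nonneg w.im, sq_abs w.im, sq_abs z.im]

lemma one_add_norm_le_of_norm_sub_le_inv {z w : ℂ} (hw : ‖w - z‖ ≤ (1 + ‖z‖)⁻¹) :
    1 + ‖z‖ ≤ 2 * (1 + ‖w‖) := by
  have : (1 + ‖z‖)⁻¹ ≤ 1 := inv_le_one_of_one_le₀ (by simp)
  linarith [norm_sub_norm_le z w, norm_sub_rev z w, norm_nonneg w]

lemma MvPolynomial.exists_abs_eval_le {σ : Type*} [Fintype σ] (p : MvPolynomial σ ℝ) :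
    ∃ C : ℝ, ∃ N : ℕ, 0 ≤ C ∧
      ∀ x : σ → ℝ, |eval x p| ≤ C * (1 + ‖x‖) ^ N := by
  induction p using MvPolynomial.induction_on with
  | C a => exact ⟨|a|, 0, abs_nonneg a, fun x => by simp⟩
  | add p q hp hq =>
    obtain ⟨C₁, N₁, hC₁, hp⟩ := hp
    obtain ⟨C₂, N₂, hC₂, hq⟩ := hq
    refine ⟨C₁ + C₂, max N₁ N₂, add_nonneg hC₁ hC₂, fun x => ?_⟩
    have hx : 1 ≤ 1 + ‖x‖ := by simp
    calc |eval x (p + q)| ≤ |eval x p| + |eval x q| := by rw [map_add]; exact abs_add_le _ _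
      _ ≤ C₁ * (1 + ‖x‖) ^ N₁ + C₂ * (1 + ‖x‖) ^ N₂ := add_le_add (hp x) (hq x)
      _ ≤ C₁ * (1 + ‖x‖) ^ max N₁ N₂ + C₂ * (1 + ‖x‖) ^ max N₁ N₂ := by
          gcongr <;> first | exact hx | omega
      _ = (C₁ + C₂) * (1 + ‖x‖) ^ max N₁ N₂ := by ring
  | mul_X p i hp =>
    obtain ⟨C, N, hC, hp⟩ := hp
    refine ⟨C, N + 1, hC, fun x => ?_⟩
    have hxi : |x i| ≤ 1 + ‖x‖ := by
      linarith [norm_le_pi_norm x i, Real.norm_eq_abs (x i)]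
    calc |eval x (p * MvPolynomial.X i)| = |eval x p| * |x i| := by simp [abs_mul]
      _ ≤ C * (1 + ‖x‖) ^ N * (1 + ‖x‖) := by gcongr; exact hp x
      _ = C * (1 + ‖x‖) ^ (N + 1) := by ring

lemma memLp_two_withDensity_of_sq_norm_mul_le {α E : Type*} [MeasurableSpace α]
    [NormedAddCommGroup E] {μ : Measure α} {f : α → E} {w g : α → ℝ}
    (hf : AEStronglyMeasurable f μ) (hw : Measurable w) (hw0 : ∀ x, 0 ≤ w x)
    (hg : Integrable g μ) (hfg : ∀ x, ‖f x‖ ^ 2 * w x ≤ g x) :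
    MemLp f 2 (μ.withDensity fun x => ENNReal.ofReal (w x)) := by
  rw [memLp_two_iff_integrable_sq_norm (hf.mono_ac (withDensity_absolutelyContinuous _ _)),
    integrable_withDensity_iff hw.ennreal_ofReal (ae_of_all _ fun _ => ENNReal.ofReal_lt_top)]
  simp only [ENNReal.toReal_ofReal (hw0 _)]
  refine hg.mono' ((hf.norm.pow 2).mul hw.aestronglyMeasurable) (ae_of_all _ fun x => ?_)
  rw [Real.norm_of_nonneg (mul_nonneg (sq_nonneg _) (hw0 x))]
  exact hfg x

lemma one_add_norm_sq_le (z : ℂ) : (1 + ‖z‖) ^ 2 ≤ 2 * (1 + z.re ^ 2 + z.im ^ 2) := by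
  have : ‖z‖ ^ 2 = z.re ^ 2 + z.im ^ 2 := by rw [Complex.sq_norm, Complex.normSq_apply]; ring
  nlinarith [sq_nonneg (1 - ‖z‖)]

/-- Bargmann's characterization of the image of the Schwartz space, with the polynomial weight
written as `(1 + ‖z‖) ^ n`. -/
def IsBargmannSchwartz (t : ℝ) (F : ℂ → ℂ) : Prop :=
  Differentiable ℂ F ∧
    ∀ n : ℕ, ∃ A : ℝ, ∀ z : ℂ, ‖F z‖ ^ 2 * (1 + ‖z‖) ^ n ≤ A * exp (z.im ^ 2 / t)

lemma isBargmannSchwartz_of_bound {t : ℝ} {F : ℂ → ℂ} (hF : Differentiable ℂ F)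
    (hbound : ∀ n : ℕ, 1 ≤ n → ∃ A : ℝ, ∀ x y : ℝ,
      ‖F (x + y * Complex.I)‖ ^ 2 ≤ A * exp (y ^ 2 / t) / (1 + x ^ 2 + y ^ 2) ^ (2 * n)) :
    IsBargmannSchwartz t F := by
  refine ⟨hF, fun n => ?_⟩
  obtain ⟨A, hA⟩ := hbound (n + 1) (by omega)
  refine ⟨2 ^ n * A, fun z => ?_⟩
  set S := 1 + z.re ^ 2 + z.im ^ 2
  have hS : 1 ≤ S := by nlinarith [sq_nonneg z.re, sq_nonneg z.im]
  have hFz : ‖F z‖ ^ 2 * S ^ (2 * (n + 1)) ≤ A * exp (z.im ^ 2 / t) := by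
    rw [← le_div_iff₀ (by positivity)]
    simpa only [Complex.re_add_im] using hA z.re z.im
  have hweight : (1 + ‖z‖) ^ n ≤ 2 ^ n * S ^ (2 * (n + 1)) := calc
    (1 + ‖z‖) ^ n ≤ ((1 + ‖z‖) ^ 2) ^ n := pow_le_pow_left₀ (by positivity)
      (by nlinarith [norm_nonneg z]) n
    _ ≤ (2 * S) ^ n := pow_le_pow_left₀ (by positivity) (one_add_norm_sq_le z) n
    _ = 2 ^ n * S ^ n := mul_pow _ _ _
    _ ≤ 2 ^ n * S ^ (2 * (n + 1)) := by gcongr; omega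
  calc ‖F z‖ ^ 2 * (1 + ‖z‖) ^ n
      ≤ ‖F z‖ ^ 2 * (2 ^ n * S ^ (2 * (n + 1))) := by gcongr
    _ = 2 ^ n * (‖F z‖ ^ 2 * S ^ (2 * (n + 1))) := by ring
    _ ≤ 2 ^ n * A * exp (z.im ^ 2 / t) := by rw [mul_assoc]; gcongr

lemma nonneg_of_forall_sq_norm_mul_le {t A : ℝ} {F : ℂ → ℂ} {n : ℕ}
    (hA : ∀ z : ℂ, ‖F z‖ ^ 2 * (1 + ‖z‖) ^ n ≤ A * exp (z.im ^ 2 / t)) : 0 ≤ A :=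
  nonneg_of_mul_nonneg_left ((by positivity : (0 : ℝ) ≤ _).trans (hA 0)) (exp_pos _)

namespace IsBargmannSchwartz

variable {t : ℝ} {F : ℂ → ℂ}

lemma deriv (ht : 0 < t) (hF : IsBargmannSchwartz t F) : IsBargmannSchwartz t (deriv F) := by
  refine ⟨hF.1.deriv, fun n => ?_⟩
  obtain ⟨A, hA⟩ := hF.2 (n + 2)
  set K := 2 ^ (n + 2) * exp (3 / t) * A
  refine ⟨K, fun z => ?_⟩
  have hz : 0 < 1 + ‖z‖ := by positivity
  have hsphere : ∀ w ∈ sphere z (1 + ‖z‖)⁻¹,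
      ‖F w‖ ^ 2 ≤ K * exp (z.im ^ 2 / t) / (1 + ‖z‖) ^ (n + 2) := by
    intro w hw
    rw [mem_sphere, dist_eq_norm] at hw
    have hexp : exp (w.im ^ 2 / t) ≤ exp (3 / t) * exp (z.im ^ 2 / t) := by
      rw [← exp_add, ← add_div]
      gcongr
      linarith [im_sq_le_of_norm_sub_le_inv hw.le]
    rw [le_div_iff₀ (by positivity)]
    calc ‖F w‖ ^ 2 * (1 + ‖z‖) ^ (n + 2)
        ≤ ‖F w‖ ^ 2 * (2 * (1 + ‖w‖)) ^ (n + 2) := by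
          gcongr; exact one_add_norm_le_of_norm_sub_le_inv hw.le
      _ = 2 ^ (n + 2) * (‖F w‖ ^ 2 * (1 + ‖w‖) ^ (n + 2)) := by rw [mul_pow]; ring
      _ ≤ 2 ^ (n + 2) * (A * (exp (3 / t) * exp (z.im ^ 2 / t))) := by
          gcongr 2 ^ (n + 2) * ?_
          exact (hA w).trans (mul_le_mul_of_nonneg_left hexp (nonneg_of_forall_sq_norm_mul_le hA))
      _ = K * exp (z.im ^ 2 / t) := by ring
  have hderiv := sq_norm_deriv_le_of_forall_mem_sphere hF.1 (inv_pos.2 hz) hsphere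
  calc _ ≤ _ := mul_le_mul_of_nonneg_right hderiv (pow_nonneg hz.le n)
    _ = K * exp (z.im ^ 2 / t) := by field_simp; ring

lemma iteratedDeriv (ht : 0 < t) (hF : IsBargmannSchwartz t F) (m : ℕ) :
    IsBargmannSchwartz t (iteratedDeriv m F) := by
  induction m with
  | zero => simpa only [iteratedDeriv_zero] using hF
  | succ m ih => simpa only [iteratedDeriv_succ] using ih.deriv ht

lemma memLp_eval_mul {c : ℝ} (hF : IsBargmannSchwartz t F)
    (p : MvPolynomial (Fin 2) ℝ) (hc : 0 ≤ c) :
    MemLp (fun z : ℂ => (MvPolynomial.eval ![z.re, z.im] p : ℂ) * F z) 2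
      (volume.withDensity fun z : ℂ => ENNReal.ofReal (c * exp (-z.im ^ 2 / t))) := by
  obtain ⟨C, N, hC, hp⟩ := p.exists_abs_eval_le
  obtain ⟨A, hA⟩ := hF.2 (2 * N + 4)
  have hcont : Continuous fun z : ℂ => (MvPolynomial.eval ![z.re, z.im] p : ℂ) * F z :=
    (Complex.continuous_ofReal.comp (p.continuous_eval.comp (by fun_prop))).mul hF.1.continuous
  have hint : Integrable (fun z : ℂ => C ^ 2 * A * c * (1 + ‖z‖) ^ (-4 : ℝ)) :=
    (integrable_one_add_norm (by norm_num [Complex.finrank_real_complex])).const_mul _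
  refine memLp_two_withDensity_of_sq_norm_mul_le hcont.aestronglyMeasurable (by fun_prop)
    (fun z => by positivity) hint fun z => ?_
  have hpz : |MvPolynomial.eval ![z.re, z.im] p| ≤ C * (1 + ‖z‖) ^ N := by
    exact (hp _).trans (by gcongr; simp [pi_norm_le_iff_of_nonneg, Fin.forall_fin_two,
      Complex.abs_re_le_norm, Complex.abs_im_le_norm])
  have hexp : exp (z.im ^ 2 / t) * exp (-z.im ^ 2 / t) = 1 := by
    rw [← exp_add, neg_div, add_neg_cancel, exp_zero]
  rw [norm_mul, Complex.norm_real, Real.norm_eq_abs, rpow_neg (by positivity), rpow_ofNat,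
    ← div_eq_mul_inv, le_div_iff₀ (by positivity)]
  calc (|MvPolynomial.eval ![z.re, z.im] p| * ‖F z‖) ^ 2 * (c * exp (-z.im ^ 2 / t))
        * (1 + ‖z‖) ^ 4
      ≤ (C * (1 + ‖z‖) ^ N * ‖F z‖) ^ 2 * (c * exp (-z.im ^ 2 / t)) * (1 + ‖z‖) ^ 4 :=
        by gcongr
    _ = C ^ 2 * c * (‖F z‖ ^ 2 * (1 + ‖z‖) ^ (2 * N + 4)) * exp (-z.im ^ 2 / t) := by ring
    _ ≤ C ^ 2 * c * (A * exp (z.im ^ 2 / t)) * exp (-z.im ^ 2 / t) := by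
        gcongr C ^ 2 * c * ?_ * _; exact hA z
    _ = C ^ 2 * A * c * (exp (z.im ^ 2 / t) * exp (-z.im ^ 2 / t)) := by ring
    _ = C ^ 2 * A * c := by rw [hexp, mul_one]

end IsBargmannSchwartz

/-- If a holomorphic `F : ℂ → ℂ` satisfies, for every positive integer `n`, a bound
`|F(x+iy)|² ≤ Aₙ e^{y²/t}/(1+x²+y²)^{2n}`, then for every (two-variable) polynomial `p`
and every `m ≥ 0`, the function `z ↦ p(x,y) F^{(m)}(z)` is square-integrable with respect
to `(πt)^{-1/2} e^{-y²/t} dx dy` on `ℂ`. -/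
theorem schwartz_image_derivatives_L2 (t : ℝ) (ht : 0 < t)
    (F : ℂ → ℂ) (hF : Differentiable ℂ F)
    (hbound : ∀ n : ℕ, 1 ≤ n → ∃ A : ℝ, ∀ x y : ℝ,
      ‖F (x + y * Complex.I)‖ ^ 2 ≤
        A * Real.exp (y ^ 2 / t) / (1 + x ^ 2 + y ^ 2) ^ (2 * n))
    (p : MvPolynomial (Fin 2) ℝ) (m : ℕ) :
    MemLp
      (fun z : ℂ => (MvPolynomial.eval ![z.re, z.im] p : ℂ) * iteratedDeriv m F z) 2
      (volume.withDensity (fun z : ℂ =>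
        ENNReal.ofReal ((Real.pi * t) ^ (-(1 : ℝ) / 2) * Real.exp (-z.im ^ 2 / t)))) :=
  ((isBargmannSchwartz_of_bound hF hbound).iteratedDeriv ht m).memLp_eval_mul p (by positivity)
end
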